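/- arXiv:0708.0499 — 7 statements merged into one kernel-verified Lean document; each statement's English description precedes it below -/
import Mathlib

section
/- Let W, W₁, W₂ be i.i.d. integrable real random variables with CDF H, and let H⁻ denote the CDF of −W. Then ∫_{-∞}^{∞} (H(t) − H⁻(t))² dt = E(|W₁ + W₂| − |W₁ − W₂|). -/
open MeasureTheory Set ProbabilityTheory

/-! With `φ_a := 1_{[a,∞)} - 1_{[-a,∞)}` (`reflectedStep a`), the difference `H - H⁻` at `t` is
the `μ`-mean of `a ↦ φ_a t`, so its square is the mean of `φ_{W₁} t * φ_{W₂} t` over the law of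
the independent pair.
After Fubini (justified by `∫ |φ_a φ_b| ≤ 2|a|` and `E|W| < ∞`) it remains to see
`∫ φ_a φ_b = |a + b| - |a - b|`: since `1_{[u,∞)} 1_{[v,∞)} = 1_{[u ⊔ v,∞)}`, the product `φ_a φ_b`
is a sum of two differences `1_{[u,∞)} - 1_{[v,∞)}`, each of integral `v - u`. -/

lemma abs_add_sub_abs_sub_eq_sup (a b : ℝ) :
    |a + b| - |a - b| = (a ⊔ -b - a ⊔ b) + (-a ⊔ b - (-a ⊔ -b)) := by
  simp only [abs_eq_max_neg, max_def]
  split_ifs <;> linarith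

lemma indicator_Ici_sub_indicator_Ici {α : Type*} [LinearOrder α] (u v : α) :
    (Ici u).indicator (1 : α → ℝ) - (Ici v).indicator 1
      = (Ico u v).indicator 1 - (Ico v u).indicator 1 := by
  ext t
  simp only [Pi.sub_apply, indicator_apply, mem_Ici, mem_Ico, Pi.one_apply]
  split_ifs <;> grind

lemma integrable_indicator_one_Ico (u v : ℝ) : Integrable ((Ico u v).indicator (1 : ℝ → ℝ)) :=
  (integrableOn_const measure_Ico_lt_top.ne (C := (1 : ℝ))).integrable_indicator measurableSet_Ico

lemma integrable_indicator_Ici_sub_indicator_Ici (u v : ℝ) :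
    Integrable ((Ici u).indicator (1 : ℝ → ℝ) - (Ici v).indicator 1) := by
  rw [indicator_Ici_sub_indicator_Ici]
  exact (integrable_indicator_one_Ico u v).sub (integrable_indicator_one_Ico v u)

lemma integral_indicator_Ici_sub_indicator_Ici (u v : ℝ) :
    ∫ t, ((Ici u).indicator (1 : ℝ → ℝ) - (Ici v).indicator 1 : ℝ → ℝ) t = v - u := by
  rw [indicator_Ici_sub_indicator_Ici, integral_sub' (integrable_indicator_one_Ico u v)
    (integrable_indicator_one_Ico v u), integral_indicator_one measurableSet_Ico,
    integral_indicator_one measurableSet_Ico, Real.volume_real_Ico, Real.volume_real_Ico]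
  rcases le_total u v with h | h <;> simp [h]

noncomputable def reflectedStep (a : ℝ) : ℝ → ℝ :=
  (Ici a).indicator 1 - (Ici (-a)).indicator 1

lemma reflectedStep_mul (a b : ℝ) :
    reflectedStep a * reflectedStep b
      = ((Ici (a ⊔ b)).indicator 1 - (Ici (a ⊔ -b)).indicator 1)
        + ((Ici (-a ⊔ -b)).indicator 1 - (Ici (-a ⊔ b)).indicator 1) := by
  simp only [reflectedStep, sub_mul, mul_sub, ← inter_indicator_one, Ici_inter_Ici]
  abel

lemma integrable_reflectedStep_mul (a b : ℝ) : Integrable (reflectedStep a * reflectedStep b) := by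
  rw [reflectedStep_mul]
  exact (integrable_indicator_Ici_sub_indicator_Ici _ _).add
    (integrable_indicator_Ici_sub_indicator_Ici _ _)

lemma integral_reflectedStep_mul (a b : ℝ) :
    ∫ t, (reflectedStep a * reflectedStep b) t = |a + b| - |a - b| := by
  rw [reflectedStep_mul, integral_add' (integrable_indicator_Ici_sub_indicator_Ici _ _)
    (integrable_indicator_Ici_sub_indicator_Ici _ _), integral_indicator_Ici_sub_indicator_Ici,
    integral_indicator_Ici_sub_indicator_Ici, abs_add_sub_abs_sub_eq_sup]

lemma abs_reflectedStep_le (a t : ℝ) :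
    |reflectedStep a t| ≤ (Ico a (-a)).indicator 1 t + (Ico (-a) a).indicator 1 t := by
  rw [reflectedStep, indicator_Ici_sub_indicator_Ici, Pi.sub_apply]
  refine (abs_sub _ _).trans_eq ?_
  have h01 (s : Set ℝ) : 0 ≤ s.indicator (1 : ℝ → ℝ) t :=
    indicator_nonneg (fun _ _ ↦ zero_le_one) t
  rw [abs_of_nonneg (h01 _), abs_of_nonneg (h01 _)]

lemma abs_reflectedStep_le_one (a t : ℝ) : |reflectedStep a t| ≤ 1 := by
  simp only [reflectedStep, Pi.sub_apply, indicator_apply, Pi.one_apply]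
  split_ifs <;> norm_num

lemma integral_norm_reflectedStep_mul_le (a b : ℝ) :
    ∫ t, ‖(reflectedStep a * reflectedStep b) t‖ ≤ 2 * |a| := by
  have hle (t : ℝ) : ‖(reflectedStep a * reflectedStep b) t‖
      ≤ (Ico a (-a)).indicator 1 t + (Ico (-a) a).indicator 1 t := by
    rw [Pi.mul_apply, norm_mul, Real.norm_eq_abs, Real.norm_eq_abs]
    exact (mul_le_of_le_one_right (abs_nonneg _) (abs_reflectedStep_le_one b t)).trans
      (abs_reflectedStep_le a t)
  have hint := (integrable_indicator_one_Ico a (-a)).add (integrable_indicator_one_Ico (-a) a)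
  refine (integral_mono (integrable_reflectedStep_mul a b).norm hint hle).trans_eq ?_
  rw [integral_add' (integrable_indicator_one_Ico _ _) (integrable_indicator_one_Ico _ _),
    integral_indicator_one measurableSet_Ico, integral_indicator_one measurableSet_Ico,
    Real.volume_real_Ico, Real.volume_real_Ico]
  rcases le_total 0 a with h | h
  · rw [max_eq_right (by linarith), max_eq_left (by linarith), abs_of_nonneg h]; ring
  · rw [max_eq_left (by linarith), max_eq_right (by linarith), abs_of_nonpos h]; ring

lemma measurable_uncurry_reflectedStep : Measurable (Function.uncurry reflectedStep) := by
  simp only [Function.uncurry_def, reflectedStep, Pi.sub_apply, indicator_apply, mem_Ici,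
    Pi.one_apply]
  exact (Measurable.ite (measurableSet_le measurable_fst measurable_snd) measurable_const
    measurable_const).sub (Measurable.ite (measurableSet_le measurable_fst.neg measurable_snd)
    measurable_const measurable_const)

lemma integrable_reflectedStep_mul_prod (μ ν : Measure ℝ) [IsFiniteMeasure μ] [IsFiniteMeasure ν]
    (hμ : Integrable (fun x : ℝ ↦ x) μ) :
    Integrable (fun z : (ℝ × ℝ) × ℝ ↦ (reflectedStep z.1.1 * reflectedStep z.1.2) z.2)
      ((μ.prod ν).prod volume) := by
  have hmeas : Measurable fun z : (ℝ × ℝ) × ℝ ↦ (reflectedStep z.1.1 * reflectedStep z.1.2) z.2 :=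
    (measurable_uncurry_reflectedStep.comp (measurable_fst.fst.prodMk measurable_snd)).mul
      (measurable_uncurry_reflectedStep.comp (measurable_fst.snd.prodMk measurable_snd))
  rw [integrable_prod_iff hmeas.aestronglyMeasurable]
  refine ⟨ae_of_all _ fun p ↦ integrable_reflectedStep_mul p.1 p.2, ?_⟩
  have hdom : Integrable (fun p : ℝ × ℝ ↦ 2 * |p.1|) (μ.prod ν) :=
    (hμ.abs.const_mul 2).comp_fst ν
  refine hdom.mono hmeas.norm.aestronglyMeasurable.integral_prod_right' (ae_of_all _ fun p ↦ ?_)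
  rw [Real.norm_of_nonneg (integral_nonneg fun _ ↦ norm_nonneg _),
    Real.norm_of_nonneg (by positivity)]
  exact integral_norm_reflectedStep_mul_le p.1 p.2

lemma integral_reflectedStep (μ : Measure ℝ) [IsFiniteMeasure μ] (t : ℝ) :
    ∫ a, reflectedStep a t ∂μ = μ.real (Iic t) - (μ.map fun x ↦ -x).real (Iic t) := by
  have hstep (a : ℝ) : reflectedStep a t = (Iic t).indicator 1 a - (Iic t).indicator 1 (-a) := by
    simp only [reflectedStep, Pi.sub_apply, indicator_apply, mem_Ici, mem_Iic, Pi.one_apply]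
  have hint (ν : Measure ℝ) [IsFiniteMeasure ν] : Integrable ((Iic t).indicator (1 : ℝ → ℝ)) ν :=
    (integrable_const 1).indicator measurableSet_Iic
  have hneg : Integrable (fun a ↦ (Iic t).indicator (1 : ℝ → ℝ) (-a)) μ :=
    (hint (μ.map fun x ↦ -x)).comp_measurable measurable_neg
  simp_rw [hstep]
  rw [integral_sub (hint μ) hneg,
    ← integral_map measurable_neg.aemeasurable (hint _).aestronglyMeasurable,
    integral_indicator_one measurableSet_Iic, integral_indicator_one measurableSet_Iic]

theorem integral_mul_integral_reflectedStep (μ ν : Measure ℝ) [IsFiniteMeasure μ]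
    [IsFiniteMeasure ν] (hμ : Integrable (fun x : ℝ ↦ x) μ) :
    ∫ t, (∫ a, reflectedStep a t ∂μ) * (∫ b, reflectedStep b t ∂ν)
      = ∫ p, |p.1 + p.2| - |p.1 - p.2| ∂(μ.prod ν) := calc
  _ = ∫ t : ℝ, ∫ p : ℝ × ℝ, (reflectedStep p.1 * reflectedStep p.2) t ∂(μ.prod ν) := by
    simp_rw [← integral_prod_mul]; rfl
  _ = ∫ p : ℝ × ℝ, (∫ t : ℝ, (reflectedStep p.1 * reflectedStep p.2) t) ∂(μ.prod ν) :=
    (integral_integral_swap (integrable_reflectedStep_mul_prod μ ν hμ)).symm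
  _ = _ := by simp_rw [integral_reflectedStep_mul]

/-- For i.i.d. integrable `W₁, W₂` with common law `μ` (CDF `H`), the squared `L²`
distance between `H` and the CDF `H⁻` of `-W` equals `E(|W₁ + W₂| - |W₁ - W₂|)`. -/
theorem sq_l2_dist_cdf_reflected {Ω : Type*} [MeasureSpace Ω]
    [IsProbabilityMeasure (ℙ : Measure Ω)]
    (W₁ W₂ : Ω → ℝ) (μ : Measure ℝ) [IsProbabilityMeasure μ]
    (hm₁ : Measurable W₁) (hm₂ : Measurable W₂)
    (hlaw₁ : Measure.map W₁ ℙ = μ) (hlaw₂ : Measure.map W₂ ℙ = μ)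
    (hindep : IndepFun W₁ W₂ ℙ)
    (hint : Integrable (fun x : ℝ => x) μ) :
    ∫ t : ℝ, ((μ (Iic t)).toReal - ((μ.map (fun x : ℝ => -x)) (Iic t)).toReal) ^ 2 =
      ∫ ω, (|W₁ ω + W₂ ω| - |W₁ ω - W₂ ω|) ∂ℙ := by
  have hjoint : Measure.map (fun ω ↦ (W₁ ω, W₂ ω)) ℙ = μ.prod μ := by
    rw [hindep.map_prod_eq_prod_map_map hm₁.aemeasurable hm₂.aemeasurable, hlaw₁, hlaw₂]
  have hcont : Continuous fun p : ℝ × ℝ ↦ |p.1 + p.2| - |p.1 - p.2| := by fun_prop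
  calc _ = ∫ t, (∫ a, reflectedStep a t ∂μ) * (∫ b, reflectedStep b t ∂μ) := by
        simp_rw [integral_reflectedStep, sq, measureReal_def]
    _ = ∫ p, |p.1 + p.2| - |p.1 - p.2| ∂(μ.prod μ) := integral_mul_integral_reflectedStep μ μ hint
    _ = _ := by
      rw [← hjoint, integral_map (hm₁.prodMk hm₂).aemeasurable hcont.aestronglyMeasurable]
end

section
/- A real random variable W satisfies ∫ (H_W(t) − H_{−W}(t))² dt = 0 (where the CDFs are integrable differences) if and only if W is symmetric about zero, equivalently E(|W₁+W₂|) = E(|W₁−W₂|) for i.i.d. copies W₁, W₂ when W is symmetric about zero. -/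
/-!
If `∫ (F_μ - F_ν)² = 0` with an integrable integrand, then the two CDFs agree almost everywhere,
hence everywhere since both are right-continuous, and so `μ = ν`. Integrability is where the first
moment enters (without it the Bochner integral is a junk `0`): `|F_μ(t) - F_ν(t)|` is at most
`μ {|x| ≥ |t|} + ν {|x| ≥ |t|}`, and by Tonelli `∫ μ {|x| ≥ |t|} dt = 2 𝔼|X|`.

For the second part, independence and the symmetry of `W₂` make `(W₁, W₂)` and `(W₁, -W₂)`
identically distributed, and `|W₁ + W₂|`, `|W₁ - W₂|` are the same function of these pairs.
-/

open MeasureTheory Set ProbabilityTheory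

theorem eq_of_ae_eq_of_continuousWithinAt_Ici {Y : Type*} [TopologicalSpace Y] [T2Space Y]
    {μ : Measure ℝ} [μ.IsOpenPosMeasure] {f g : ℝ → Y} (hfg : f =ᵐ[μ] g)
    (hf : ∀ x, ContinuousWithinAt f (Ici x) x) (hg : ∀ x, ContinuousWithinAt g (Ici x) x) :
    f = g := by
  funext x
  have hx : x ∈ closure (Ioi x ∩ {y | f y = g y}) :=
    closure_minimal ((Measure.dense_of_ae hfg).open_subset_closure_inter isOpen_Ioi)
      isClosed_closure (by rw [closure_Ioi]; exact self_mem_Ici)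
  have hcont : ContinuousWithinAt (fun y => (f y, g y)) (Ioi x ∩ {y | f y = g y}) x :=
    ((hf x).prodMk (hg x)).mono fun y hy => mem_Ici.2 (le_of_lt hy.1)
  have := hcont.mem_closure hx (t := {p : Y × Y | p.1 = p.2}) fun y hy => hy.2
  rwa [isClosed_eq continuous_fst continuous_snd |>.closure_eq] at this

theorem lintegral_measure_abs_le_abs (μ : Measure ℝ) [SFinite μ] :
    ∫⁻ t, μ {x | |t| ≤ |x|} = ∫⁻ x, ENNReal.ofReal (2 * |x|) ∂μ := by
  have hs : MeasurableSet {p : ℝ × ℝ | |p.1| ≤ |p.2|} :=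
    measurableSet_le measurable_fst.abs measurable_snd.abs
  have hIcc (x : ℝ) : {t : ℝ | |t| ≤ |x|} = Icc (-|x|) |x| := by ext; simp [abs_le]
  calc ∫⁻ t, μ {x | |t| ≤ |x|} = (volume.prod μ) {p : ℝ × ℝ | |p.1| ≤ |p.2|} :=
        (Measure.prod_apply hs).symm
    _ = ∫⁻ x, ENNReal.ofReal (2 * |x|) ∂μ := by
        rw [Measure.prod_apply_symm hs]
        simp_rw [preimage_ofPred_eq, hIcc, Real.volume_Icc, sub_neg_eq_add, two_mul]

theorem integrable_measureReal_abs_le_abs {μ : Measure ℝ} [SFinite μ]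
    (hμ : Integrable (fun x : ℝ => x) μ) :
    Integrable (fun t => μ.real {x | |t| ≤ |x|}) := by
  refine integrable_toReal_of_lintegral_ne_top ?_ ?_
  · exact (measurable_measure_prodMk_left
      (measurableSet_le measurable_fst.abs measurable_snd.abs)).aemeasurable
  · rw [lintegral_measure_abs_le_abs]
    exact (hμ.abs.const_mul 2).lintegral_lt_top.ne

theorem cdf_le_measureReal_abs_le_abs (μ : Measure ℝ) [IsProbabilityMeasure μ] {t : ℝ}
    (ht : t < 0) : cdf μ t ≤ μ.real {x | |t| ≤ |x|} := by
  rw [cdf_eq_real]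
  refine measureReal_mono fun x (hx : x ≤ t) => ?_
  simp only [mem_ofPred_eq, abs_of_neg ht, abs_of_neg (hx.trans_lt ht)]
  linarith

theorem one_sub_cdf_le_measureReal_abs_le_abs (μ : Measure ℝ) [IsProbabilityMeasure μ] {t : ℝ}
    (ht : 0 ≤ t) : 1 - cdf μ t ≤ μ.real {x | |t| ≤ |x|} := by
  rw [cdf_eq_real, ← probReal_compl_eq_one_sub measurableSet_Iic, compl_Iic]
  refine measureReal_mono fun x (hx : t < x) => ?_
  simp only [mem_ofPred_eq, abs_of_nonneg ht, abs_of_pos (ht.trans_lt hx)]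
  exact hx.le

theorem integrable_cdf_sub_cdf {μ ν : Measure ℝ} [IsProbabilityMeasure μ] [IsProbabilityMeasure ν]
    (hμ : Integrable (fun x : ℝ => x) μ) (hν : Integrable (fun x : ℝ => x) ν) :
    Integrable (fun t => cdf μ t - cdf ν t) := by
  refine ((integrable_measureReal_abs_le_abs hμ).add (integrable_measureReal_abs_le_abs hν)).mono'
    ((monotone_cdf μ).measurable.sub (monotone_cdf ν).measurable).aestronglyMeasurable
    (Filter.Eventually.of_forall fun t => ?_)
  rw [Pi.add_apply, Real.norm_eq_abs, abs_sub_le_iff]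
  rcases lt_or_ge t 0 with ht | ht
  · have := cdf_le_measureReal_abs_le_abs μ ht
    have := cdf_le_measureReal_abs_le_abs ν ht
    constructor <;> linarith [cdf_nonneg μ t, cdf_nonneg ν t]
  · have := one_sub_cdf_le_measureReal_abs_le_abs μ ht
    have := one_sub_cdf_le_measureReal_abs_le_abs ν ht
    constructor <;> linarith [cdf_le_one μ t, cdf_le_one ν t]

theorem integral_sq_cdf_sub_cdf_eq_zero_iff {μ ν : Measure ℝ} [IsProbabilityMeasure μ]
    [IsProbabilityMeasure ν] (hμ : Integrable (fun x : ℝ => x) μ)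
    (hν : Integrable (fun x : ℝ => x) ν) :
    ∫ t, (cdf μ t - cdf ν t) ^ 2 = 0 ↔ μ = ν := by
  refine ⟨fun h => ?_, fun h => by simp [h]⟩
  have hD := integrable_cdf_sub_cdf hμ hν
  have hbdd : ∀ t, ‖cdf μ t - cdf ν t‖ ≤ 1 := fun t => by
    rw [Real.norm_eq_abs, abs_sub_le_iff]
    constructor <;> linarith [cdf_le_one μ t, cdf_le_one ν t, cdf_nonneg μ t, cdf_nonneg ν t]
  have hsq : Integrable (fun t => (cdf μ t - cdf ν t) ^ 2) := by
    simpa only [sq] using hD.bdd_mul hD.aestronglyMeasurable (Filter.Eventually.of_forall hbdd)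
  have hae : (fun t => cdf μ t) =ᵐ[volume] fun t => cdf ν t := by
    filter_upwards [(integral_eq_zero_iff_of_nonneg (fun t => sq_nonneg _) hsq).1 h] with t ht
    exact sub_eq_zero.1 (pow_eq_zero_iff two_ne_zero |>.1 ht)
  have hcdf : (cdf μ : ℝ → ℝ) = cdf ν :=
    eq_of_ae_eq_of_continuousWithinAt_Ici hae (cdf μ).right_continuous (cdf ν).right_continuous
  exact Measure.eq_of_cdf μ ν (StieltjesFunction.ext (congrFun hcdf))

theorem integrable_id_map_neg {μ : Measure ℝ} (hμ : Integrable (fun x : ℝ => x) μ) :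
    Integrable (fun x : ℝ => x) (μ.map fun x => -x) :=
  (integrable_map_measure aestronglyMeasurable_id measurable_neg.aemeasurable).2 hμ.neg

theorem integral_abs_add_eq_integral_abs_sub {Ω : Type*} [MeasurableSpace Ω] {P : Measure Ω}
    [IsFiniteMeasure P] {X Y : Ω → ℝ} (hX : AEMeasurable X P) (hXY : IndepFun X Y P)
    (hY : IdentDistrib Y (-Y) P P) :
    ∫ ω, |X ω + Y ω| ∂P = ∫ ω, |X ω - Y ω| ∂P := by
  have hpair := (IdentDistrib.refl hX).prodMk hY hXY (hXY.comp measurable_id measurable_neg)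
  simpa [sub_eq_add_neg] using
    (hpair.comp (measurable_fst.add measurable_snd).abs).integral_eq

theorem identDistrib_neg_of_map_neg_eq {Ω : Type*} [MeasurableSpace Ω] {P : Measure Ω} {Y : Ω → ℝ}
    (hY : Measurable Y) (hsymm : (P.map Y).map (fun x => -x) = P.map Y) :
    IdentDistrib Y (-Y) P P where
  aemeasurable_fst := hY.aemeasurable
  aemeasurable_snd := hY.neg.aemeasurable
  map_eq := by rw [← hsymm, Measure.map_map measurable_neg hY]; rfl

theorem l2_dist_cdf_reflected_eq_zero_iff_symm_general {Ω : Type*} [MeasureSpace Ω]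
    [IsProbabilityMeasure (ℙ : Measure Ω)]
    (W₁ W₂ : Ω → ℝ) (μ : Measure ℝ) [IsProbabilityMeasure μ]
    (hm₁ : Measurable W₁) (hm₂ : Measurable W₂)
    (hlaw₂ : Measure.map W₂ ℙ = μ)
    (hindep : IndepFun W₁ W₂ ℙ)
    (hint : Integrable (fun x : ℝ => x) μ) :
    ((∫ t : ℝ, ((μ (Iic t)).toReal - ((μ.map (fun x : ℝ => -x)) (Iic t)).toReal) ^ 2 = 0)
        ↔ μ.map (fun x : ℝ => -x) = μ) ∧
      (μ.map (fun x : ℝ => -x) = μ →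
        ∫ ω, |W₁ ω + W₂ ω| ∂ℙ = ∫ ω, |W₁ ω - W₂ ω| ∂ℙ) := by
  have : IsProbabilityMeasure (μ.map fun x : ℝ => -x) :=
    Measure.isProbabilityMeasure_map measurable_neg.aemeasurable
  refine ⟨?_, fun hsymm => ?_⟩
  · simp_rw [← measureReal_def, ← cdf_eq_real]
    rw [integral_sq_cdf_sub_cdf_eq_zero_iff hint (integrable_id_map_neg hint), eq_comm]
  · subst hlaw₂
    exact integral_abs_add_eq_integral_abs_sub hm₁.aemeasurable hindep
      (identDistrib_neg_of_map_neg_eq hm₂ hsymm)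

/-- The squared `L²` distance between the CDF of `W` and that of `-W` vanishes iff `W`
is symmetric about zero; and in that case `E|W₁+W₂| = E|W₁-W₂|` for i.i.d. copies. -/
theorem l2_dist_cdf_reflected_eq_zero_iff_symm {Ω : Type*} [MeasureSpace Ω]
    [IsProbabilityMeasure (ℙ : Measure Ω)]
    (W₁ W₂ : Ω → ℝ) (μ : Measure ℝ) [IsProbabilityMeasure μ]
    (hm₁ : Measurable W₁) (hm₂ : Measurable W₂)
    (hlaw₁ : Measure.map W₁ ℙ = μ) (hlaw₂ : Measure.map W₂ ℙ = μ)
    (hindep : IndepFun W₁ W₂ ℙ)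
    (hint : Integrable (fun x : ℝ => x) μ) :
    ((∫ t : ℝ, ((μ (Iic t)).toReal - ((μ.map (fun x : ℝ => -x)) (Iic t)).toReal) ^ 2 = 0)
        ↔ μ.map (fun x : ℝ => -x) = μ) ∧
      (μ.map (fun x : ℝ => -x) = μ →
        ∫ ω, |W₁ ω + W₂ ω| ∂ℙ = ∫ ω, |W₁ ω - W₂ ω| ∂ℙ) :=
  l2_dist_cdf_reflected_eq_zero_iff_symm_general W₁ W₂ μ hm₁ hm₂ hlaw₂ hindep hint
end

section
/- (2-identifiability of the finite part) Let Y take values μ₁ < μ₂ with probabilities λ₁, λ₂ where λ₁ ∉ {0, 1/2, 1}, and let Y′ take values μ′₁ < μ′₂ with probabilities λ′₁, λ′₂, with Y, Y′ independent. If Y − Y′ is symmetric about zero, then λ = λ′ and μ = μ′. -/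
/-!
The law of `Y - Y'` is `∑ λᵢ λ'ⱼ δ_{μᵢ - μ'ⱼ}`. Its extreme atoms are `μ₁ - μ'₂` and `μ₂ - μ'₁`,
carrying the masses `λ₁ λ'₂` and `λ₂ λ'₁`; symmetry forces them to be opposite and of equal mass,
so `μ₁ + μ₂ = μ'₁ + μ'₂` and `λ₁ λ'₂ = λ₂ λ'₁`. The two middle atoms `μ₁ - μ'₁` and `μ₂ - μ'₂` are
then opposite as well; if they were distinct, symmetry would also give `λ₁ λ'₁ = λ₂ λ'₂`, hence
`λ₁ = λ₂ = 1/2`. So they coincide, which pins down `μ = μ'`, and then `λ = λ'`. When `Y'` is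
degenerate, `Y - Y'` is a symmetric two-point law, again forcing `λ₁ = 1/2`.
-/

open MeasureTheory
open scoped ENNReal

namespace MeasureTheory.Measure

variable {G : Type*} [MeasurableSpace G] [MeasurableSingletonClass G]

theorem smul_dirac_apply_singleton [DecidableEq G] (a : ℝ≥0∞) (x z : G) :
    (a • Measure.dirac x) {z} = if x = z then a else 0 := by
  split_ifs with h <;> simp [h]

theorem apply_singleton_neg_of_map_neg_eq [InvolutiveNeg G] [MeasurableNeg G]
    {ν : Measure G} (h : ν.map (fun x => -x) = ν) (x : G) : ν {-x} = ν {x} := by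
  conv_rhs => rw [← h, Measure.map_apply measurable_neg (measurableSet_singleton x)]
  congr 1
  ext
  simp

theorem map_sub_prod_smul_dirac_add [AddGroup G] [MeasurableSub₂ G] (a₁ a₂ b₁ b₂ : ℝ≥0∞)
    (x₁ x₂ y₁ y₂ : G) :
    ((a₁ • Measure.dirac x₁ + a₂ • Measure.dirac x₂).prod
        (b₁ • Measure.dirac y₁ + b₂ • Measure.dirac y₂)).map (fun p : G × G => p.1 - p.2) =
      (a₁ * b₁) • Measure.dirac (x₁ - y₁) + (a₁ * b₂) • Measure.dirac (x₁ - y₂) +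
        ((a₂ * b₁) • Measure.dirac (x₂ - y₁) + (a₂ * b₂) • Measure.dirac (x₂ - y₂)) := by
  have hsub : Measurable fun p : G × G => p.1 - p.2 := measurable_fst.sub measurable_snd
  simp only [Measure.add_prod, Measure.prod_add, Measure.prod_smul_left, Measure.prod_smul_right,
    Measure.dirac_prod_dirac, Measure.map_add _ _ hsub, Measure.map_smul, Measure.map_dirac,
    smul_add, smul_smul]
  simp only [mul_comm b₁, mul_comm b₂]
  abel

end MeasureTheory.Measure

section Ordered

variable {α : Type*} [AddCommGroup α] [LinearOrder α] [IsOrderedAddMonoid α]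

theorem eq_neg_of_support_subset_Icc {M : Type*} [Zero M] {f : α → M} (hf : ∀ x, f (-x) = f x)
    {a b : α} (hsupp : Function.support f ⊆ Set.Icc a b) (ha : f a ≠ 0) (hb : f b ≠ 0) :
    a = -b := by
  have h₁ : a ≤ -b := (hsupp (show f (-b) ≠ 0 by rwa [hf])).1
  have h₂ : -a ≤ b := (hsupp (show f (-a) ≠ 0 by rwa [hf])).2
  exact le_antisymm h₁ (by simpa using neg_le_neg h₂)

variable [MeasurableSpace α] [MeasurableSingletonClass α] [MeasurableNeg α]

theorem eq_of_map_neg_smul_dirac_add_eq {a₁ a₂ : ℝ≥0∞} {x₁ x₂ : α} (hx : x₁ < x₂)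
    (ha₁ : a₁ ≠ 0) (ha₂ : a₂ ≠ 0)
    (h : (a₁ • Measure.dirac x₁ + a₂ • Measure.dirac x₂).map (fun x => -x) =
      a₁ • Measure.dirac x₁ + a₂ • Measure.dirac x₂) :
    a₁ = a₂ := by
  set ν := a₁ • Measure.dirac x₁ + a₂ • Measure.dirac x₂
  have hν : ∀ z, ν {z} = (if x₁ = z then a₁ else 0) + (if x₂ = z then a₂ else 0) := fun z => by
    simp only [ν, Measure.add_apply, Measure.smul_dirac_apply_singleton]
  have hν₁ : ν {x₁} = a₁ := by simp [hν, hx.ne']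
  have hν₂ : ν {x₂} = a₂ := by simp [hν, hx.ne]
  have hsupp : Function.support (fun z => ν {z}) ⊆ Set.Icc x₁ x₂ := by
    intro z hz
    by_contra hz'
    have hne : ∀ w ∈ Set.Icc x₁ x₂, w ≠ z := fun w hw hwz => hz' (hwz ▸ hw)
    refine hz ?_
    simp only [hν, if_neg (hne _ ⟨le_rfl, hx.le⟩), if_neg (hne _ ⟨hx.le, le_rfl⟩), add_zero]
  have hsym := Measure.apply_singleton_neg_of_map_neg_eq h
  have hx₁ : x₁ = -x₂ :=
    eq_neg_of_support_subset_Icc hsym hsupp (by rwa [hν₁]) (by rwa [hν₂])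
  rw [← hν₁, ← hν₂, hx₁, hsym]

theorem eq_and_eq_of_map_neg_smul_dirac_sub_eq {a₁ a₂ b₁ b₂ : ℝ≥0∞} {x₁ x₂ y₁ y₂ : α}
    (hx : x₁ < x₂) (hy : y₁ < y₂) (ha₁ : a₁ ≠ 0) (ha₂ : a₂ ≠ 0) (hb₁ : b₁ ≠ 0) (hb₂ : b₂ ≠ 0)
    (hb : b₁ + b₂ ≠ ∞) (ha : a₁ ≠ a₂)
    (h : ((a₁ * b₁) • Measure.dirac (x₁ - y₁) + (a₁ * b₂) • Measure.dirac (x₁ - y₂) +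
        ((a₂ * b₁) • Measure.dirac (x₂ - y₁) + (a₂ * b₂) • Measure.dirac (x₂ - y₂))).map
          (fun x => -x) =
      (a₁ * b₁) • Measure.dirac (x₁ - y₁) + (a₁ * b₂) • Measure.dirac (x₁ - y₂) +
        ((a₂ * b₁) • Measure.dirac (x₂ - y₁) + (a₂ * b₂) • Measure.dirac (x₂ - y₂))) :
    x₁ = y₁ ∧ x₂ = y₂ ∧ a₁ * b₂ = a₂ * b₁ := by
  set ν := (a₁ * b₁) • Measure.dirac (x₁ - y₁) + (a₁ * b₂) • Measure.dirac (x₁ - y₂) +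
        ((a₂ * b₁) • Measure.dirac (x₂ - y₁) + (a₂ * b₂) • Measure.dirac (x₂ - y₂))
  have hν : ∀ z, ν {z} = (if x₁ - y₁ = z then a₁ * b₁ else 0) +
      (if x₁ - y₂ = z then a₁ * b₂ else 0) +
      ((if x₂ - y₁ = z then a₂ * b₁ else 0) + (if x₂ - y₂ = z then a₂ * b₂ else 0)) := fun z => by
    simp only [ν, Measure.add_apply, Measure.smul_dirac_apply_singleton]
  have h₁₁ : x₁ - y₂ < x₁ - y₁ := sub_lt_sub_left hy x₁
  have h₂₂ : x₁ - y₂ < x₂ - y₂ := sub_lt_sub_right hx y₂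
  have h₁₁' : x₁ - y₁ < x₂ - y₁ := sub_lt_sub_right hx y₁
  have h₂₂' : x₂ - y₂ < x₂ - y₁ := sub_lt_sub_left hy x₂
  have hmin : ν {x₁ - y₂} = a₁ * b₂ := by
    simp [hν, h₁₁.ne', h₂₂.ne', (h₂₂.trans h₂₂').ne']
  have hmax : ν {x₂ - y₁} = a₂ * b₁ := by
    simp [hν, h₁₁'.ne, h₂₂'.ne, (h₂₂.trans h₂₂').ne]
  have hsupp : Function.support (fun z => ν {z}) ⊆ Set.Icc (x₁ - y₂) (x₂ - y₁) := by
    intro z hz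
    by_contra hz'
    have hne : ∀ w ∈ Set.Icc (x₁ - y₂) (x₂ - y₁), w ≠ z := fun w hw hwz => hz' (hwz ▸ hw)
    refine hz ?_
    simp only [hν, if_neg (hne _ ⟨h₁₁.le, h₁₁'.le⟩), if_neg (hne _ ⟨le_rfl, (h₂₂.trans h₂₂').le⟩),
      if_neg (hne _ ⟨(h₂₂.trans h₂₂').le, le_rfl⟩), if_neg (hne _ ⟨h₂₂.le, h₂₂'.le⟩), add_zero]
  have hsym := Measure.apply_singleton_neg_of_map_neg_eq h
  have hext : x₁ - y₂ = -(x₂ - y₁) :=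
    eq_neg_of_support_subset_Icc hsym hsupp (by simp [hmin, ha₁, hb₂]) (by simp [hmax, ha₂, hb₁])
  have hcross : a₁ * b₂ = a₂ * b₁ := by rw [← hmin, ← hmax, hext, hsym]
  have hmid : x₁ - y₁ = -(x₂ - y₂) := by
    rw [neg_sub, sub_eq_sub_iff_add_eq_add] at hext ⊢
    rw [hext, add_comm]
  have hdiag : x₁ - y₁ = x₂ - y₂ := by
    by_contra hdiag
    have h₁ : ν {x₁ - y₁} = a₁ * b₁ := by simp [hν, h₁₁.ne, h₁₁'.ne', Ne.symm hdiag]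
    have h₂ : ν {x₂ - y₂} = a₂ * b₂ := by simp [hν, h₂₂.ne, h₂₂'.ne', hdiag]
    have hdiag' : a₁ * b₁ = a₂ * b₂ := by rw [← h₁, ← h₂, hmid, hsym]
    refine ha ((ENNReal.mul_right_inj (a := b₁ + b₂) (by simp [hb₁]) hb).1 ?_)
    calc (b₁ + b₂) * a₁ = a₁ * b₁ + a₁ * b₂ := by ring
      _ = a₂ * b₂ + a₂ * b₁ := by rw [hdiag', hcross]
      _ = (b₁ + b₂) * a₂ := by ring
  have hzero : x₁ - y₁ = 0 := self_eq_neg.1 (hmid.trans (congrArg _ hdiag.symm))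
  exact ⟨sub_eq_zero.1 hzero, sub_eq_zero.1 (hdiag ▸ hzero), hcross⟩

end Ordered

/-- 2-identifiability of the finite part: if `Y ~ λ₁δ_{μ₁} + λ₂δ_{μ₂}` with
`λ₁ ∉ {0, 1/2, 1}` and `Y' ~ λ₁'δ_{μ₁'} + λ₂'δ_{μ₂'}` are independent and `Y - Y'` is
symmetric about zero, then the parameters coincide. -/
theorem two_point_identifiability
    (l₁ l₂ l₁' l₂' : ℝ) (m₁ m₂ m₁' m₂' : ℝ)
    (hl : 0 ≤ l₁ ∧ 0 ≤ l₂ ∧ l₁ + l₂ = 1) (hl' : 0 ≤ l₁' ∧ 0 ≤ l₂' ∧ l₁' + l₂' = 1)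
    (hnot : l₁ ≠ 0 ∧ l₁ ≠ 1 / 2 ∧ l₁ ≠ 1)
    (hm : m₁ < m₂) (hm' : m₁' < m₂')
    (hsym :
      (Measure.map (fun p : ℝ × ℝ => p.1 - p.2)
          ((ENNReal.ofReal l₁ • Measure.dirac m₁ + ENNReal.ofReal l₂ • Measure.dirac m₂).prod
            (ENNReal.ofReal l₁' • Measure.dirac m₁' +
              ENNReal.ofReal l₂' • Measure.dirac m₂'))).map (fun x : ℝ => -x) =
        Measure.map (fun p : ℝ × ℝ => p.1 - p.2)
          ((ENNReal.ofReal l₁ • Measure.dirac m₁ + ENNReal.ofReal l₂ • Measure.dirac m₂).prod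
            (ENNReal.ofReal l₁' • Measure.dirac m₁' +
              ENNReal.ofReal l₂' • Measure.dirac m₂'))) :
    l₁ = l₁' ∧ l₂ = l₂' ∧ m₁ = m₁' ∧ m₂ = m₂' := by
  obtain ⟨hl₁, hl₂, hsum⟩ := hl
  obtain ⟨hl₁', hl₂', hsum'⟩ := hl'
  obtain ⟨hne_zero, hne_half, hne_one⟩ := hnot
  rw [Measure.map_sub_prod_smul_dirac_add] at hsym
  have ha₁ : ENNReal.ofReal l₁ ≠ 0 := (ENNReal.ofReal_pos.2 (hl₁.lt_of_ne' hne_zero)).ne'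
  have ha₂ : ENNReal.ofReal l₂ ≠ 0 := (ENNReal.ofReal_pos.2 (by contrapose! hne_one; linarith)).ne'
  have ha : ENNReal.ofReal l₁ ≠ ENNReal.ofReal l₂ := by
    rw [Ne, ENNReal.ofReal_eq_ofReal_iff hl₁ hl₂]
    contrapose! hne_half
    linarith
  rcases hl₁'.eq_or_lt with rfl | hb₁
  · obtain rfl : l₂' = 1 := by linarith
    simp only [ENNReal.ofReal_zero, ENNReal.ofReal_one, mul_zero, mul_one, zero_smul, zero_add]
      at hsym
    exact absurd (eq_of_map_neg_smul_dirac_add_eq (sub_lt_sub_right hm _) ha₁ ha₂ hsym) ha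
  rcases hl₂'.eq_or_lt with rfl | hb₂
  · obtain rfl : l₁' = 1 := by linarith
    simp only [ENNReal.ofReal_zero, ENNReal.ofReal_one, mul_zero, mul_one, zero_smul, add_zero]
      at hsym
    exact absurd (eq_of_map_neg_smul_dirac_add_eq (sub_lt_sub_right hm _) ha₁ ha₂ hsym) ha
  obtain ⟨rfl, rfl, hcross⟩ := eq_and_eq_of_map_neg_smul_dirac_sub_eq hm hm' ha₁ ha₂
    (ENNReal.ofReal_pos.2 hb₁).ne' (ENNReal.ofReal_pos.2 hb₂).ne' (by simp) ha hsym
  rw [← ENNReal.ofReal_mul hl₁, ← ENNReal.ofReal_mul hl₂,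
    ENNReal.ofReal_eq_ofReal_iff (by positivity) (by positivity)] at hcross
  have hweight : l₁ = l₁' := by linear_combination hcross + l₁' * hsum - l₁ * hsum'
  exact ⟨hweight, by linarith, rfl, rfl⟩
end

section
/- If Y − Y′ is symmetric about zero for independent finitely supported Y, Y′ with ordered supports, then the extreme support points satisfy μ_k − μ′₁ = μ′_k − μ₁ and the extreme masses satisfy λ₁ λ′_k = λ′₁ λ_k. -/
/-!
The largest value `a i₁ - b j₀` of `Y - Y'` is attained only at `(i₁, j₀)`, so it is an atom of
mass `c i₁ * c' j₀`; likewise the smallest value `a i₀ - b j₁` carries mass `c i₀ * c' j₁`.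
Symmetry maps atoms to atoms of the same mass, so the two extremes are negatives of each other
and carry equal mass.
-/

open MeasureTheory Measure ENNReal

theorem MeasureTheory.Measure.extreme_atoms_of_isNegInvariant (ν : Measure ℝ) [ν.IsNegInvariant]
    {m M : ℝ} (hm : ν {m} ≠ 0) (hM : ν {M} ≠ 0) (hsupp : ∀ x, ν {x} ≠ 0 → m ≤ x ∧ x ≤ M) :
    m = -M ∧ ν {m} = ν {M} := by
  have hatom (x : ℝ) : ν {-x} = ν {x} := by rw [← Set.neg_singleton, measure_neg]
  have hmM : m ≤ -M := (hsupp _ (by rwa [hatom])).1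
  have hMm : -m ≤ M := (hsupp _ (by rwa [hatom])).2
  have hm_eq : m = -M := by linarith
  exact ⟨hm_eq, by rw [hm_eq, hatom]⟩

theorem eq_and_eq_of_sub_eq_top_sub_bot {ι ι' : Type*} [PartialOrder ι] [PartialOrder ι']
    {a : ι → ℝ} {b : ι' → ℝ} (ha : StrictMono a) (hb : StrictMono b) {i₁ : ι} {j₀ : ι'}
    (hi₁ : IsTop i₁) (hj₀ : IsBot j₀) {i : ι} {j : ι'} (h : a i - b j = a i₁ - b j₀) :
    i = i₁ ∧ j = j₀ := by
  have ha' : a i ≤ a i₁ := ha.monotone (hi₁ i)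
  have hb' : b j₀ ≤ b j := hb.monotone (hj₀ j)
  constructor
  · by_contra hi
    linarith [ha (hi₁.lt_of_ne hi)]
  · by_contra hj
    linarith [hb (hj₀.lt_of_ne (Ne.symm hj))]

section DiscreteLaws

variable {ι ι' : Type*} [Fintype ι] [Fintype ι']

theorem MeasureTheory.Measure.map_sub_prod_sum_smul_dirac (c : ι → ℝ≥0∞) (c' : ι' → ℝ≥0∞)
    (a : ι → ℝ) (b : ι' → ℝ) :
    ((∑ i, c i • dirac (a i)).prod (∑ j, c' j • dirac (b j))).map (fun p : ℝ × ℝ => p.1 - p.2) =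
      ∑ p : ι × ι', (c p.1 * c' p.2) • dirac (a p.1 - b p.2) := by
  have hsub : Measurable fun p : ℝ × ℝ => p.1 - p.2 := measurable_fst.sub measurable_snd
  rw [← sum_fintype, ← sum_fintype, Measure.prod_sum, map_sum hsub.aemeasurable, sum_fintype]
  refine Finset.sum_congr rfl fun p _ => ?_
  rw [prod_smul_left, prod_smul_right, dirac_prod_dirac, Measure.map_smul, Measure.map_smul,
    map_dirac' hsub, smul_smul, mul_comm]

theorem MeasureTheory.Measure.sum_smul_dirac_apply_singleton (w : ι → ℝ≥0∞) (d : ι → ℝ) (x : ℝ) :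
    (∑ p, w p • dirac (d p)) {x} = ∑ p with d p = x, w p := by
  simp [Finset.sum_filter, Set.indicator, eq_comm]

theorem MeasureTheory.Measure.sum_smul_dirac_apply_singleton_of_unique (w : ι → ℝ≥0∞)
    (d : ι → ℝ) {p₀ : ι} (h : ∀ p, d p = d p₀ → p = p₀) :
    (∑ p, w p • dirac (d p)) {d p₀} = w p₀ := by
  have hfilter : ({p | d p = d p₀} : Finset ι) = {p₀} := by
    ext p
    simpa using ⟨h p, fun hp => hp ▸ rfl⟩
  rw [sum_smul_dirac_apply_singleton, hfilter, Finset.sum_singleton]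

theorem MeasureTheory.Measure.exists_eq_of_sum_smul_dirac_apply_singleton_ne_zero
    {w : ι → ℝ≥0∞} {d : ι → ℝ} {x : ℝ} (h : (∑ p, w p • dirac (d p)) {x} ≠ 0) :
    ∃ p, d p = x := by
  rw [sum_smul_dirac_apply_singleton] at h
  obtain ⟨p, hp, -⟩ := Finset.exists_ne_zero_of_sum_ne_zero h
  exact ⟨p, (Finset.mem_filter.1 hp).2⟩

variable [PartialOrder ι] [PartialOrder ι']

theorem extreme_atoms_of_map_neg_map_sub_prod_eq (c : ι → ℝ≥0∞) (c' : ι' → ℝ≥0∞)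
    {a : ι → ℝ} {b : ι' → ℝ} (ha : StrictMono a) (hb : StrictMono b) {i₀ i₁ : ι} {j₀ j₁ : ι'}
    (hi₀ : IsBot i₀) (hi₁ : IsTop i₁) (hj₀ : IsBot j₀) (hj₁ : IsTop j₁)
    (hc₀ : c i₀ * c' j₁ ≠ 0) (hc₁ : c i₁ * c' j₀ ≠ 0)
    (hsym : (((∑ i, c i • dirac (a i)).prod (∑ j, c' j • dirac (b j))).map
        (fun p : ℝ × ℝ => p.1 - p.2)).map (fun x : ℝ => -x) =
      ((∑ i, c i • dirac (a i)).prod (∑ j, c' j • dirac (b j))).map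
        (fun p : ℝ × ℝ => p.1 - p.2)) :
    a i₁ - b j₀ = b j₁ - a i₀ ∧ c i₀ * c' j₁ = c i₁ * c' j₀ := by
  rw [map_sub_prod_sum_smul_dirac] at hsym
  set ν := ∑ p : ι × ι', (c p.1 * c' p.2) • dirac (a p.1 - b p.2)
  have : ν.IsNegInvariant := ⟨hsym⟩
  have hmax : ν {a i₁ - b j₀} = c i₁ * c' j₀ :=
    sum_smul_dirac_apply_singleton_of_unique _ _ (p₀ := (i₁, j₀)) fun p hp =>
      Prod.ext_iff.2 (eq_and_eq_of_sub_eq_top_sub_bot ha hb hi₁ hj₀ hp)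
  have hmin : ν {a i₀ - b j₁} = c i₀ * c' j₁ :=
    sum_smul_dirac_apply_singleton_of_unique _ _ (p₀ := (i₀, j₁)) fun p hp =>
      Prod.ext_iff.2 (eq_and_eq_of_sub_eq_top_sub_bot hb ha hj₁ hi₀
        (by linarith : b p.2 - a p.1 = b j₁ - a i₀)).symm
  have hsupp (x : ℝ) (hx : ν {x} ≠ 0) : a i₀ - b j₁ ≤ x ∧ x ≤ a i₁ - b j₀ := by
    obtain ⟨⟨i, j⟩, rfl⟩ := exists_eq_of_sum_smul_dirac_apply_singleton_ne_zero hx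
    constructor <;>
      linarith [ha.monotone (hi₀ i), ha.monotone (hi₁ i), hb.monotone (hj₀ j), hb.monotone (hj₁ j)]
  obtain ⟨hloc, hmass⟩ := ν.extreme_atoms_of_isNegInvariant (hmin ▸ hc₀) (hmax ▸ hc₁) hsupp
  rw [hmin, hmax] at hmass
  exact ⟨by linarith, hmass⟩

end DiscreteLaws

theorem extreme_points_of_symmetric_difference_general (k : ℕ) (hk : 0 < k)
    (lam lam' : Fin k → ℝ) (mu mu' : Fin k → ℝ)
    (hmono : StrictMono mu) (hmono' : StrictMono mu')
    (hpos₁ : 0 < lam ⟨0, hk⟩) (hposk : 0 < lam ⟨k - 1, Nat.sub_lt hk one_pos⟩)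
    (hpos₁' : 0 < lam' ⟨0, hk⟩) (hposk' : 0 < lam' ⟨k - 1, Nat.sub_lt hk one_pos⟩)
    (hsym :
      (Measure.map (fun p : ℝ × ℝ => p.1 - p.2)
          ((∑ j, ENNReal.ofReal (lam j) • Measure.dirac (mu j)).prod
            (∑ j, ENNReal.ofReal (lam' j) • Measure.dirac (mu' j)))).map (fun x : ℝ => -x) =
        Measure.map (fun p : ℝ × ℝ => p.1 - p.2)
          ((∑ j, ENNReal.ofReal (lam j) • Measure.dirac (mu j)).prod
            (∑ j, ENNReal.ofReal (lam' j) • Measure.dirac (mu' j)))) :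
    mu ⟨k - 1, Nat.sub_lt hk one_pos⟩ - mu' ⟨0, hk⟩ =
        mu' ⟨k - 1, Nat.sub_lt hk one_pos⟩ - mu ⟨0, hk⟩ ∧
      lam ⟨0, hk⟩ * lam' ⟨k - 1, Nat.sub_lt hk one_pos⟩ =
        lam' ⟨0, hk⟩ * lam ⟨k - 1, Nat.sub_lt hk one_pos⟩ := by
  have hbot : IsBot (⟨0, hk⟩ : Fin k) := fun i => Nat.zero_le i
  have htop : IsTop (⟨k - 1, Nat.sub_lt hk one_pos⟩ : Fin k) := fun i =>
    Nat.le_sub_one_of_lt i.isLt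
  obtain ⟨hloc, hmass⟩ := extreme_atoms_of_map_neg_map_sub_prod_eq _ _ hmono hmono'
    hbot htop hbot htop (mul_ne_zero (ofReal_pos.2 hpos₁).ne' (ofReal_pos.2 hposk').ne')
    (mul_ne_zero (ofReal_pos.2 hposk).ne' (ofReal_pos.2 hpos₁').ne') hsym
  rw [← ofReal_mul hpos₁.le, ← ofReal_mul hposk.le,
    ofReal_eq_ofReal_iff (mul_pos hpos₁ hposk').le (mul_pos hposk hpos₁').le] at hmass
  exact ⟨hloc, by linarith⟩

/-- If `Y - Y'` is symmetric about zero for independent finitely supported `Y, Y'` with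
ordered supports, then the extreme support points satisfy `μ_k - μ'_1 = μ'_k - μ_1` and
the extreme masses satisfy `λ₁ λ'_k = λ'₁ λ_k`. -/
theorem extreme_points_of_symmetric_difference (k : ℕ) (hk : 0 < k)
    (lam lam' : Fin k → ℝ) (mu mu' : Fin k → ℝ)
    (hlam : ∀ j, 0 ≤ lam j) (hlam' : ∀ j, 0 ≤ lam' j)
    (hsum : ∑ j, lam j = 1) (hsum' : ∑ j, lam' j = 1)
    (hmono : StrictMono mu) (hmono' : StrictMono mu')
    (hpos₁ : 0 < lam ⟨0, hk⟩) (hposk : 0 < lam ⟨k - 1, Nat.sub_lt hk one_pos⟩)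
    (hpos₁' : 0 < lam' ⟨0, hk⟩) (hposk' : 0 < lam' ⟨k - 1, Nat.sub_lt hk one_pos⟩)
    (hsym :
      (Measure.map (fun p : ℝ × ℝ => p.1 - p.2)
          ((∑ j, ENNReal.ofReal (lam j) • Measure.dirac (mu j)).prod
            (∑ j, ENNReal.ofReal (lam' j) • Measure.dirac (mu' j)))).map (fun x : ℝ => -x) =
        Measure.map (fun p : ℝ × ℝ => p.1 - p.2)
          ((∑ j, ENNReal.ofReal (lam j) • Measure.dirac (mu j)).prod
            (∑ j, ENNReal.ofReal (lam' j) • Measure.dirac (mu' j)))) :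
    mu ⟨k - 1, Nat.sub_lt hk one_pos⟩ - mu' ⟨0, hk⟩ =
        mu' ⟨k - 1, Nat.sub_lt hk one_pos⟩ - mu ⟨0, hk⟩ ∧
      lam ⟨0, hk⟩ * lam' ⟨k - 1, Nat.sub_lt hk one_pos⟩ =
        lam' ⟨0, hk⟩ * lam ⟨k - 1, Nat.sub_lt hk one_pos⟩ :=
  extreme_points_of_symmetric_difference_general k hk lam lam' mu mu' hmono hmono' hpos₁ hposk
    hpos₁' hposk' hsym
end

section
/- (Case 1 symmetrization identity) For reals c, d, r with d > 0 and r > 1, let Y take values (c, c+4d, c+6d) with weights proportional to (r², r²−1, r), and Y′ take values (c+d, c+3d, c+5d) with weights proportional to (r, r+1, 1), with Y, Y′ independent. Then Y − Y′ is symmetric about zero; specifically it is supported on {−5d, −3d, −d, d, 3d, 5d} with weights proportional to (r², r³+r², r³+r²−1, r³+r²−1, r³+r², r²). -/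
/-!
Expanding the product of the two three-point laws gives nine atoms with weights `p q / (s s')`,
and `s s' = T`. The differences land on `±d, ±3d, ±5d`, three of these points being hit twice;
merging their weights, `r³ + (r² - 1) = (r³ + r² - r - 1) + r` and `(r³ - r) + (r² + r) = r³ + r²`,
produces the symmetric profile.
-/

open MeasureTheory ENNReal

namespace MeasureTheory.Measure

section DifferenceOfDiscreteLaws

variable {G : Type*} [Sub G] [MeasurableSpace G] [MeasurableSub₂ G]

lemma map_sub_prod_smul_dirac (a b : ℝ≥0∞) (x y : G) :
    ((a • dirac x).prod (b • dirac y)).map (fun p : G × G => p.1 - p.2) =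
      (a * b) • dirac (x - y) := by
  rw [prod_smul_left, prod_smul_right, dirac_prod_dirac, smul_smul, Measure.map_smul,
    map_dirac' measurable_sub]

lemma map_sub_prod_sum_smul_dirac_s12 {ι κ : Type*} [Fintype ι] [Fintype κ]
    (a : ι → ℝ≥0∞) (x : ι → G) (b : κ → ℝ≥0∞) (y : κ → G) :
    ((∑ i, a i • dirac (x i)).prod (∑ j, b j • dirac (y j))).map (fun p : G × G => p.1 - p.2) =
      ∑ i, ∑ j, (a i * b j) • dirac (x i - y j) := by
  rw [← sum_fintype, ← sum_fintype, prod_sum, map_sum measurable_sub.aemeasurable, sum_fintype,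
    Fintype.sum_prod_type]
  simp only [map_sub_prod_smul_dirac]

end DifferenceOfDiscreteLaws

lemma map_neg_palindromic_sum_smul_dirac {G : Type*} [InvolutiveNeg G] [MeasurableSpace G]
    [MeasurableNeg G] (a b e : ℝ≥0∞) (x y z : G) :
    (a • dirac (-x) + b • dirac (-y) + e • dirac (-z) + e • dirac z + b • dirac y +
        a • dirac x).map (fun t : G => -t) =
      a • dirac (-x) + b • dirac (-y) + e • dirac (-z) + e • dirac z + b • dirac y +
        a • dirac x := by
  simp only [Measure.map_add _ _ measurable_neg, Measure.map_smul, map_dirac' measurable_neg,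
    neg_neg]
  abel

lemma ofReal_div_smul_eq_add {α : Type*} [MeasurableSpace α] {a b c t : ℝ} (ha : 0 ≤ a)
    (hb : 0 ≤ b) (ht : 0 ≤ t) (h : a + b = c) (μ : Measure α) :
    ENNReal.ofReal (c / t) • μ = ENNReal.ofReal (a / t) • μ + ENNReal.ofReal (b / t) • μ := by
  rw [← h, add_div, ofReal_add (div_nonneg ha ht) (div_nonneg hb ht), add_smul]

end MeasureTheory.Measure

lemma ENNReal.ofReal_div_mul_ofReal_div {a b s t : ℝ} (ha : 0 ≤ a) (hs : 0 ≤ s) :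
    ENNReal.ofReal (a / s) * ENNReal.ofReal (b / t) = ENNReal.ofReal (a * b / (s * t)) := by
  rw [← ofReal_mul (div_nonneg ha hs), div_mul_div_comm]

open Measure

theorem case1_symmetrization_general (c d r : ℝ) (hr : 1 < r) :
    let s : ℝ := r ^ 2 + (r ^ 2 - 1) + r
    let s' : ℝ := r + (r + 1) + 1
    let T : ℝ := r ^ 2 + (r ^ 3 + r ^ 2) + (r ^ 3 + r ^ 2 - 1) + (r ^ 3 + r ^ 2 - 1) +
      (r ^ 3 + r ^ 2) + r ^ 2
    let ν : Measure ℝ := Measure.map (fun p : ℝ × ℝ => p.1 - p.2)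
      ((ENNReal.ofReal (r ^ 2 / s) • Measure.dirac c +
          ENNReal.ofReal ((r ^ 2 - 1) / s) • Measure.dirac (c + 4 * d) +
          ENNReal.ofReal (r / s) • Measure.dirac (c + 6 * d)).prod
        (ENNReal.ofReal (r / s') • Measure.dirac (c + d) +
          ENNReal.ofReal ((r + 1) / s') • Measure.dirac (c + 3 * d) +
          ENNReal.ofReal (1 / s') • Measure.dirac (c + 5 * d)))
    ν.map (fun x : ℝ => -x) = ν ∧
      ν = ENNReal.ofReal (r ^ 2 / T) • Measure.dirac (-(5 * d)) +
          ENNReal.ofReal ((r ^ 3 + r ^ 2) / T) • Measure.dirac (-(3 * d)) +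
          ENNReal.ofReal ((r ^ 3 + r ^ 2 - 1) / T) • Measure.dirac (-d) +
          ENNReal.ofReal ((r ^ 3 + r ^ 2 - 1) / T) • Measure.dirac d +
          ENNReal.ofReal ((r ^ 3 + r ^ 2) / T) • Measure.dirac (3 * d) +
          ENNReal.ofReal (r ^ 2 / T) • Measure.dirac (5 * d) := by
  intro s s' T ν
  have hs : 0 < s := by simp only [s]; nlinarith
  have hss' : 0 ≤ s * s' := mul_nonneg hs.le (by simp only [s']; linarith)
  have hr2 : 0 ≤ r ^ 2 - 1 := by nlinarith
  have hν := map_sub_prod_sum_smul_dirac_s12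
    ![ENNReal.ofReal (r ^ 2 / s), ENNReal.ofReal ((r ^ 2 - 1) / s), ENNReal.ofReal (r / s)]
    ![c, c + 4 * d, c + 6 * d]
    ![ENNReal.ofReal (r / s'), ENNReal.ofReal ((r + 1) / s'), ENNReal.ofReal (1 / s')]
    ![c + d, c + 3 * d, c + 5 * d]
  simp only [Fin.sum_univ_three, Matrix.cons_val_zero, Matrix.cons_val_one, Matrix.cons_val_two,
    Matrix.head_cons, Matrix.tail_cons, ofReal_div_mul_ofReal_div (sq_nonneg r) hs.le,
    ofReal_div_mul_ofReal_div hr2 hs.le, ofReal_div_mul_ofReal_div (zero_le_one.trans hr.le) hs.le]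
    at hν
  change ν = _ at hν
  refine (fun law => ⟨?symm, law⟩) ?law
  case symm => rw [law]; exact map_neg_palindromic_sum_smul_dirac _ _ _ _ _ _
  rw [hν, show T = s * s' by simp only [T, s, s']; ring,
    ofReal_div_smul_eq_add (μ := dirac (-d)) (by positivity) hr2 hss'
      (by ring : r ^ 3 + (r ^ 2 - 1) = r ^ 3 + r ^ 2 - 1),
    ofReal_div_smul_eq_add (μ := dirac d) (by nlinarith) (by positivity) hss'
      (by ring : (r ^ 3 + r ^ 2 - r - 1) + r = r ^ 3 + r ^ 2 - 1),
    ofReal_div_smul_eq_add (μ := dirac (3 * d)) (by nlinarith) (by positivity) hss'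
      (by ring : (r ^ 3 - r) + (r ^ 2 + r) = r ^ 3 + r ^ 2)]
  -- `ring_nf` normalizes every weight and every atom (`c - (c + d)` to `-d`, ...), after which
  -- both sides are the same nine terms up to order.
  ring_nf
  abel

/-- Case 1 symmetrization identity: with `Y` on `(c, c+4d, c+6d)` with weights
proportional to `(r², r²-1, r)` and `Y'` on `(c+d, c+3d, c+5d)` with weights proportional
to `(r, r+1, 1)`, independent, the difference `Y - Y'` is symmetric about zero and is
supported on `{-5d, -3d, -d, d, 3d, 5d}` with weights proportional to
`(r², r³+r², r³+r²-1, r³+r²-1, r³+r², r²)`. -/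
theorem case1_symmetrization (c d r : ℝ) (hd : 0 < d) (hr : 1 < r) :
    let s : ℝ := r ^ 2 + (r ^ 2 - 1) + r
    let s' : ℝ := r + (r + 1) + 1
    let T : ℝ := r ^ 2 + (r ^ 3 + r ^ 2) + (r ^ 3 + r ^ 2 - 1) + (r ^ 3 + r ^ 2 - 1) +
      (r ^ 3 + r ^ 2) + r ^ 2
    let ν : Measure ℝ := Measure.map (fun p : ℝ × ℝ => p.1 - p.2)
      ((ENNReal.ofReal (r ^ 2 / s) • Measure.dirac c +
          ENNReal.ofReal ((r ^ 2 - 1) / s) • Measure.dirac (c + 4 * d) +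
          ENNReal.ofReal (r / s) • Measure.dirac (c + 6 * d)).prod
        (ENNReal.ofReal (r / s') • Measure.dirac (c + d) +
          ENNReal.ofReal ((r + 1) / s') • Measure.dirac (c + 3 * d) +
          ENNReal.ofReal (1 / s') • Measure.dirac (c + 5 * d)))
    ν.map (fun x : ℝ => -x) = ν ∧
      ν = ENNReal.ofReal (r ^ 2 / T) • Measure.dirac (-(5 * d)) +
          ENNReal.ofReal ((r ^ 3 + r ^ 2) / T) • Measure.dirac (-(3 * d)) +
          ENNReal.ofReal ((r ^ 3 + r ^ 2 - 1) / T) • Measure.dirac (-d) +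
          ENNReal.ofReal ((r ^ 3 + r ^ 2 - 1) / T) • Measure.dirac d +
          ENNReal.ofReal ((r ^ 3 + r ^ 2) / T) • Measure.dirac (3 * d) +
          ENNReal.ofReal (r ^ 2 / T) • Measure.dirac (5 * d) :=
  case1_symmetrization_general c d r hr
end

section
/- (Inversion of the two-component mixture system) Suppose λ₁ + λ₂ = 1, λ₁ ≠ 1/2, and F₀(x) = λ₁ G₀(x − μ₁) + λ₂ G₀(x − μ₂), where G₀ is symmetric about zero. Then at all points x such that μ₁ + μ₂ − x is a continuity point of F₀, the 2×2 linear system (F₀(x), F₀⁻(x − μ₁ − μ₂))ᵀ = [[λ₁, λ₂],[λ₂, λ₁]] (G₀(x−μ₁), G₀(x−μ₂))ᵀ holds, where F₀⁻(t) = 1 − F₀(−t); and the matrix [[λ₁,λ₂],[λ₂,λ₁]] is invertible precisely because λ₁ ≠ λ₂. -/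
open Matrix

theorem det_fin_two_of_swap_ne_zero_iff {K : Type*} [Field K] {a b : K} (hab : a + b ≠ 0) :
    (!![a, b; b, a] : Matrix (Fin 2) (Fin 2) K).det ≠ 0 ↔ a ≠ b := by
  have hdet : (!![a, b; b, a] : Matrix (Fin 2) (Fin 2) K).det = (a - b) * (a + b) := by
    rw [det_fin_two_of]; ring
  rw [hdet, mul_ne_zero_iff, sub_ne_zero, and_iff_left hab]

/-- Reflecting a mixture of a symmetric `G` through `m₁ + m₂` swaps the two weights. -/
theorem one_sub_mixture_reflect {α R : Type*} [AddCommGroup α] [CommRing R] {G : α → R}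
    (hG : ∀ t, G t = 1 - G (-t)) {l₁ l₂ : R} (hsum : l₁ + l₂ = 1) (m₁ m₂ x : α) :
    1 - (l₁ * G (-(x - m₁ - m₂) - m₁) + l₂ * G (-(x - m₁ - m₂) - m₂)) =
      l₂ * G (x - m₁) + l₁ * G (x - m₂) := by
  have h₁ : -(-(x - m₁ - m₂) - m₁) = x - m₂ := by abel
  have h₂ : -(-(x - m₁ - m₂) - m₂) = x - m₁ := by abel
  rw [hG (-(x - m₁ - m₂) - m₁), hG (-(x - m₁ - m₂) - m₂), h₁, h₂]
  linear_combination -hsum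

theorem two_component_mixture_inversion_general
    (l₁ l₂ m₁ m₂ : ℝ) (hsum : l₁ + l₂ = 1)
    (G₀ : ℝ → ℝ) (hGsym : ∀ t, G₀ t = 1 - G₀ (-t))
    (F₀ : ℝ → ℝ) (hF : ∀ x, F₀ x = l₁ * G₀ (x - m₁) + l₂ * G₀ (x - m₂))
    (x : ℝ) :
    (F₀ x = l₁ * G₀ (x - m₁) + l₂ * G₀ (x - m₂) ∧
      1 - F₀ (-(x - m₁ - m₂)) = l₂ * G₀ (x - m₁) + l₁ * G₀ (x - m₂)) ∧
      ((!![l₁, l₂; l₂, l₁] : Matrix (Fin 2) (Fin 2) ℝ).det ≠ 0 ↔ l₁ ≠ l₂) :=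
  ⟨⟨hF x, hF _ ▸ one_sub_mixture_reflect hGsym hsum m₁ m₂ x⟩,
    det_fin_two_of_swap_ne_zero_iff (hsum ▸ one_ne_zero)⟩

/-- Inversion of the two-component mixture system: with `F₀ = λ₁ G₀(· - μ₁) + λ₂ G₀(· - μ₂)`,
`λ₁ + λ₂ = 1`, `λ₁ ≠ 1/2`, and `G₀` symmetric about zero, at every `x` such that
`μ₁ + μ₂ - x` is a continuity point of `F₀` the linear system
`(F₀(x), F₀⁻(x - μ₁ - μ₂))ᵀ = [[λ₁, λ₂], [λ₂, λ₁]] (G₀(x - μ₁), G₀(x - μ₂))ᵀ` holds,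
and the matrix is invertible precisely because `λ₁ ≠ λ₂`. -/
theorem two_component_mixture_inversion
    (l₁ l₂ m₁ m₂ : ℝ) (hsum : l₁ + l₂ = 1) (hhalf : l₁ ≠ 1 / 2)
    (G₀ : ℝ → ℝ) (hGsym : ∀ t, G₀ t = 1 - G₀ (-t))
    (F₀ : ℝ → ℝ) (hF : ∀ x, F₀ x = l₁ * G₀ (x - m₁) + l₂ * G₀ (x - m₂))
    (x : ℝ) (hcont : ContinuousAt F₀ (m₁ + m₂ - x)) :
    (F₀ x = l₁ * G₀ (x - m₁) + l₂ * G₀ (x - m₂) ∧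
      1 - F₀ (-(x - m₁ - m₂)) = l₂ * G₀ (x - m₁) + l₁ * G₀ (x - m₂)) ∧
      ((!![l₁, l₂; l₂, l₁] : Matrix (Fin 2) (Fin 2) ℝ).det ≠ 0 ↔ l₁ ≠ l₂) :=
  two_component_mixture_inversion_general l₁ l₂ m₁ m₂ hsum G₀ hGsym F₀ hF x
end

section
/- (L¹ convergence of empirical CDF under finite first moment) If F₀ is the CDF of an integrable random variable and F̂ₙ is the empirical CDF of an i.i.d. sample from F₀, then ∫_{-∞}^{∞} |F̂ₙ(t) − F₀(t)| dt → 0 almost surely as n → ∞. -/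
/-!
The empirical CDF `F̂ₙ` is the CDF of the empirical measure `νₙ` of the sample. By Tonelli,
`∫_{t<0} F(t) dt = E X⁻` and `∫_{t≥0} (1 - F(t)) dt = E X⁺` for the CDF `F` of any law, so the
strong law of large numbers makes these integrals for `F̂ₙ` converge almost surely to those for
`F₀`. The strong law applied to the indicators `1{X ≤ t}`, together with Fubini, also gives
`F̂ₙ(t) → F₀(t)` for almost every `t`, almost surely. On each half-line, Scheffé's argument turns
convergence of the integrals plus pointwise convergence into `L¹` convergence:
`|f - g| = (f - g) + 2 (g - f)⁺`, and `(g - f)⁺ ≤ g` for `f ≥ 0`, so dominated convergence applies.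
-/

open MeasureTheory ProbabilityTheory Filter Topology Set

theorem tendsto_integral_abs_sub_of_tendsto_integral {α ι : Type*} [MeasurableSpace α]
    {μ : Measure α} {l : Filter ι} [l.IsCountablyGenerated] {f : ι → α → ℝ} {g : α → ℝ}
    (hf_nonneg : ∀ i, 0 ≤ᵐ[μ] f i) (hf : ∀ i, Integrable (f i) μ) (hg : Integrable g μ)
    (hlim : ∀ᵐ a ∂μ, Tendsto (fun i => f i a) l (𝓝 (g a)))
    (hlim_integral : Tendsto (fun i => ∫ a, f i a ∂μ) l (𝓝 (∫ a, g a ∂μ))) :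
    Tendsto (fun i => ∫ a, |f i a - g a| ∂μ) l (𝓝 0) := by
  have hdefect_int : ∀ i, Integrable (fun a => max (g a - f i a) 0) μ :=
    fun i => (hg.sub (hf i)).pos_part
  have hdefect : Tendsto (fun i => ∫ a, max (g a - f i a) 0 ∂μ) l (𝓝 0) := by
    have := tendsto_integral_filter_of_dominated_convergence (fun a => |g a|)
      (Eventually.of_forall fun i => (hdefect_int i).aestronglyMeasurable)
      (Eventually.of_forall fun i => (hf_nonneg i).mono fun a (ha : 0 ≤ f i a) => by
        rw [Real.norm_of_nonneg (le_max_right _ _)]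
        exact max_le (by linarith [le_abs_self (g a)]) (abs_nonneg _))
      hg.abs (hlim.mono fun a ha => by
        simpa using ((tendsto_const_nhds (x := g a)).sub ha).max tendsto_const_nhds)
    simpa using this
  have habs : ∀ i, ∫ a, |f i a - g a| ∂μ
      = (∫ a, f i a ∂μ - ∫ a, g a ∂μ) + 2 * ∫ a, max (g a - f i a) 0 ∂μ := fun i => by
    have hpt : ∀ a, |f i a - g a| = (f i a - g a) + 2 * max (g a - f i a) 0 := fun a => by
      rcases le_total (g a) (f i a) with h | h
      · rw [abs_of_nonneg (by linarith), max_eq_right (by linarith)]; ring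
      · rw [abs_of_nonpos (by linarith), max_eq_left (by linarith)]; ring
    simp_rw [hpt]
    rw [integral_add (f := fun a => f i a - g a) ((hf i).sub hg) ((hdefect_int i).const_mul 2),
      integral_sub (hf i) hg, integral_const_mul]
  simp_rw [habs]
  simpa using (hlim_integral.sub_const (∫ a, g a ∂μ)).add (hdefect.const_mul 2)

lemma lintegral_measure_slice_comm {α β : Type*} [MeasurableSpace α] [MeasurableSpace β]
    (μ : Measure α) (ν : Measure β) [SFinite μ] [SFinite ν] {S : Set (α × β)}
    (hS : MeasurableSet S) :
    ∫⁻ a, ν (Prod.mk a ⁻¹' S) ∂μ = ∫⁻ b, μ ((·, b) ⁻¹' S) ∂ν :=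
  (Measure.prod_apply hS).symm.trans (Measure.prod_apply_symm hS)

section LayerCake

variable (ν : Measure ℝ)

lemma lintegral_measure_Iic_Iio_zero [SFinite ν] :
    ∫⁻ t in Iio 0, ν (Iic t) = ∫⁻ x, ENNReal.ofReal (-x) ∂ν := by
  refine (lintegral_measure_slice_comm (volume.restrict (Iio (0 : ℝ))) ν
    (measurableSet_le measurable_snd measurable_fst)).trans (lintegral_congr fun x => ?_)
  change volume.restrict (Iio 0) (Ici x) = _
  rw [Measure.restrict_apply' measurableSet_Iio, Ici_inter_Iio, Real.volume_Ico, zero_sub]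

lemma lintegral_measure_Ioi_Ici_zero [SFinite ν] :
    ∫⁻ t in Ici 0, ν (Ioi t) = ∫⁻ x, ENNReal.ofReal x ∂ν := by
  refine (lintegral_measure_slice_comm (volume.restrict (Ici (0 : ℝ))) ν
    (measurableSet_lt measurable_fst measurable_snd)).trans (lintegral_congr fun x => ?_)
  change volume.restrict (Ici 0) (Iio x) = _
  rw [Measure.restrict_apply' measurableSet_Ici, Iio_inter_Ici, Real.volume_Ico, sub_zero]

variable [IsFiniteMeasure ν]

lemma measurable_measureReal_Iic : Measurable fun t => ν.real (Iic t) :=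
  Monotone.measurable fun _ _ h => measureReal_mono (Iic_subset_Iic.2 h)

lemma measurable_measureReal_Ioi : Measurable fun t => ν.real (Ioi t) :=
  Antitone.measurable fun _ _ h => measureReal_mono (Ioi_subset_Ioi h)

lemma integral_measureReal_Iic_Iio_zero :
    ∫ t in Iio 0, ν.real (Iic t) = ∫ x, max (-x) 0 ∂ν := by
  rw [integral_eq_lintegral_of_nonneg_ae (ae_of_all _ fun _ => measureReal_nonneg)
      (measurable_measureReal_Iic ν).aestronglyMeasurable,
    integral_eq_lintegral_of_nonneg_ae (f := fun x => max (-x) 0)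
      (ae_of_all _ fun _ => le_max_right _ _) (by fun_prop)]
  simp [ofReal_measureReal, lintegral_measure_Iic_Iio_zero]

lemma integral_measureReal_Ioi_Ici_zero :
    ∫ t in Ici 0, ν.real (Ioi t) = ∫ x, max x 0 ∂ν := by
  rw [integral_eq_lintegral_of_nonneg_ae (ae_of_all _ fun _ => measureReal_nonneg)
      (measurable_measureReal_Ioi ν).aestronglyMeasurable,
    integral_eq_lintegral_of_nonneg_ae (f := fun x => max x 0)
      (ae_of_all _ fun _ => le_max_right _ _) (by fun_prop)]
  simp [ofReal_measureReal, lintegral_measure_Ioi_Ici_zero]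

variable {ν}

lemma integrableOn_measureReal_Iic_Iio_zero (h : Integrable (fun x : ℝ => x) ν) :
    IntegrableOn (fun t => ν.real (Iic t)) (Iio 0) := by
  refine ⟨(measurable_measureReal_Iic ν).aestronglyMeasurable, ?_⟩
  rw [hasFiniteIntegral_iff_ofReal (ae_of_all _ fun _ => measureReal_nonneg)]
  simpa [ofReal_measureReal, lintegral_measure_Iic_Iio_zero] using h.neg.lintegral_lt_top

lemma integrableOn_measureReal_Ioi_Ici_zero (h : Integrable (fun x : ℝ => x) ν) :
    IntegrableOn (fun t => ν.real (Ioi t)) (Ici 0) := by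
  refine ⟨(measurable_measureReal_Ioi ν).aestronglyMeasurable, ?_⟩
  rw [hasFiniteIntegral_iff_ofReal (ae_of_all _ fun _ => measureReal_nonneg)]
  simpa [ofReal_measureReal, lintegral_measure_Ioi_Ici_zero] using h.lintegral_lt_top

end LayerCake

section CDFDistance

variable {ν μ : Measure ℝ} [IsProbabilityMeasure ν] [IsProbabilityMeasure μ]

lemma abs_measureReal_Iic_sub (t : ℝ) :
    |ν.real (Iic t) - μ.real (Iic t)| = |ν.real (Ioi t) - μ.real (Ioi t)| := by
  rw [← compl_Iic, probReal_compl_eq_one_sub measurableSet_Iic,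
    probReal_compl_eq_one_sub measurableSet_Iic, abs_sub_comm]
  ring_nf

lemma integrable_abs_measureReal_Iic_sub (hν : Integrable (fun x : ℝ => x) ν)
    (hμ : Integrable (fun x : ℝ => x) μ) :
    Integrable fun t => |ν.real (Iic t) - μ.real (Iic t)| := by
  rw [← integrableOn_univ, ← Iio_union_Ici (a := 0)]
  refine IntegrableOn.union ?_ ?_
  · exact ((integrableOn_measureReal_Iic_Iio_zero hν).sub
      (integrableOn_measureReal_Iic_Iio_zero hμ)).abs
  · simp_rw [abs_measureReal_Iic_sub]
    exact ((integrableOn_measureReal_Ioi_Ici_zero hν).sub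
      (integrableOn_measureReal_Ioi_Ici_zero hμ)).abs

end CDFDistance

theorem tendsto_integral_abs_measureReal_Iic_sub {ι : Type*} {l : Filter ι}
    [l.IsCountablyGenerated] {ν : ι → Measure ℝ} [∀ i, IsProbabilityMeasure (ν i)]
    {μ : Measure ℝ} [IsProbabilityMeasure μ]
    (hν : ∀ i, Integrable (fun x : ℝ => x) (ν i)) (hμ : Integrable (fun x : ℝ => x) μ)
    (hcdf : ∀ᵐ t, Tendsto (fun i => (ν i).real (Iic t)) l (𝓝 (μ.real (Iic t))))
    (hpos : Tendsto (fun i => ∫ x, max x 0 ∂ν i) l (𝓝 (∫ x, max x 0 ∂μ)))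
    (hneg : Tendsto (fun i => ∫ x, max (-x) 0 ∂ν i) l (𝓝 (∫ x, max (-x) 0 ∂μ))) :
    Tendsto (fun i => ∫ t, |(ν i).real (Iic t) - μ.real (Iic t)|) l (𝓝 0) := by
  have hIio : Tendsto (fun i => ∫ t in Iio 0, |(ν i).real (Iic t) - μ.real (Iic t)|) l (𝓝 0) := by
    refine tendsto_integral_abs_sub_of_tendsto_integral
      (fun i => ae_of_all _ fun _ => measureReal_nonneg)
      (fun i => integrableOn_measureReal_Iic_Iio_zero (hν i))
      (integrableOn_measureReal_Iic_Iio_zero hμ) (ae_restrict_of_ae hcdf) ?_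
    simpa only [integral_measureReal_Iic_Iio_zero] using hneg
  have hIci : Tendsto (fun i => ∫ t in Ici 0, |(ν i).real (Iic t) - μ.real (Iic t)|) l (𝓝 0) := by
    simp_rw [abs_measureReal_Iic_sub]
    refine tendsto_integral_abs_sub_of_tendsto_integral
      (fun i => ae_of_all _ fun _ => measureReal_nonneg)
      (fun i => integrableOn_measureReal_Ioi_Ici_zero (hν i))
      (integrableOn_measureReal_Ioi_Ici_zero hμ) (ae_restrict_of_ae (hcdf.mono fun t ht => ?_)) ?_
    · simp_rw [← compl_Iic, probReal_compl_eq_one_sub measurableSet_Iic]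
      exact ht.const_sub 1
    · simpa only [integral_measureReal_Ioi_Ici_zero] using hpos
  have hsplit : ∀ i, ∫ t, |(ν i).real (Iic t) - μ.real (Iic t)| =
      (∫ t in Iio 0, |(ν i).real (Iic t) - μ.real (Iic t)|) +
        ∫ t in Ici 0, |(ν i).real (Iic t) - μ.real (Iic t)| := fun i => by
    rw [← compl_Iio, integral_add_compl measurableSet_Iio
      (integrable_abs_measureReal_Iic_sub (hν i) hμ)]
  simpa only [hsplit, add_zero] using hIio.add hIci

section EmpiricalMeasure

variable {α : Type*} [MeasurableSpace α]

/-- For `n = 0` this is the zero measure (`0⁻¹ = ∞` multiplies the empty sum). -/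
noncomputable def empiricalMeasure (x : ℕ → α) (n : ℕ) : Measure α :=
  (n : ENNReal)⁻¹ • ∑ i ∈ Finset.range n, Measure.dirac (x i)

instance isProbabilityMeasure_empiricalMeasure_succ (x : ℕ → α) (n : ℕ) :
    IsProbabilityMeasure (empiricalMeasure x (n + 1)) := by
  constructor
  simp [empiricalMeasure, ENNReal.inv_mul_cancel]

variable {f : α → ℝ}

lemma integrable_empiricalMeasure (x : ℕ → α) (hf : StronglyMeasurable f) (n : ℕ) :
    Integrable f (empiricalMeasure x n) := by
  rcases Nat.eq_zero_or_pos n with rfl | hn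
  · simp [empiricalMeasure]
  · exact (integrable_finsetSum_measure.2 fun i _ => integrable_dirac' hf enorm_lt_top).smul_measure
      (by simp [hn.ne'])

lemma integral_empiricalMeasure (x : ℕ → α) (hf : StronglyMeasurable f) (n : ℕ) :
    ∫ a, f a ∂empiricalMeasure x n = (∑ i ∈ Finset.range n, f (x i)) / n := by
  rw [empiricalMeasure, integral_smul_measure,
    integral_finsetSum_measure fun i _ => integrable_dirac' hf enorm_lt_top]
  simp [integral_dirac' f _ hf, div_eq_inv_mul]

end EmpiricalMeasure

lemma measureReal_empiricalMeasure_Iic (x : ℕ → ℝ) (n : ℕ) (t : ℝ) :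
    (empiricalMeasure x n).real (Iic t) =
      (∑ i ∈ Finset.range n, if x i ≤ t then (1 : ℝ) else 0) / n := by
  rw [← integral_indicator_one measurableSet_Iic,
    integral_empiricalMeasure x (stronglyMeasurable_one.indicator measurableSet_Iic)]
  simp [indicator_apply]

section StrongLaw

variable {Ω : Type*} [MeasureSpace Ω]

theorem ae_tendsto_integral_empiricalMeasure {α : Type*} [MeasurableSpace α] {X : ℕ → Ω → α}
    {μ : Measure α} (hmeas : ∀ i, Measurable (X i)) (hindep : iIndepFun X ℙ)
    (hlaw : ∀ i, Measure.map (X i) ℙ = μ) {f : α → ℝ} (hf : Measurable f)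
    (hfμ : Integrable f μ) :
    ∀ᵐ ω, Tendsto (fun n => ∫ a, f a ∂empiricalMeasure (X · ω) n) atTop (𝓝 (∫ a, f a ∂μ)) := by
  have hident : ∀ i, IdentDistrib (f ∘ X i) (f ∘ X 0) ℙ ℙ := fun i =>
    (IdentDistrib.mk (hmeas i).aemeasurable (hmeas 0).aemeasurable (by rw [hlaw, hlaw])).comp hf
  have hint : Integrable (f ∘ X 0) ℙ := by
    rw [← hlaw 0] at hfμ
    exact hfμ.comp_measurable (hmeas 0)
  have hmean : ∫ ω, f (X 0 ω) = ∫ a, f a ∂μ := by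
    rw [← hlaw 0, integral_map (hmeas 0).aemeasurable hf.aestronglyMeasurable]
  have := strong_law_ae_real (fun i => f ∘ X i) hint
    (fun i j hij => (hindep.indepFun hij).comp hf hf) hident
  simpa only [integral_empiricalMeasure _ hf.stronglyMeasurable, hmean, Function.comp_apply]
    using this

theorem ae_ae_tendsto_measureReal_empiricalMeasure_Iic [IsProbabilityMeasure (ℙ : Measure Ω)]
    {X : ℕ → Ω → ℝ} {μ : Measure ℝ} [IsFiniteMeasure μ] (hmeas : ∀ i, Measurable (X i))
    (hindep : iIndepFun X ℙ) (hlaw : ∀ i, Measure.map (X i) ℙ = μ) :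
    ∀ᵐ ω, ∀ᵐ t, Tendsto (fun n => (empiricalMeasure (X · ω) n).real (Iic t)) atTop
      (𝓝 (μ.real (Iic t))) := by
  have hpt : ∀ t, ∀ᵐ ω, Tendsto (fun n => (empiricalMeasure (X · ω) n).real (Iic t)) atTop
      (𝓝 (μ.real (Iic t))) := fun t => by
    simpa only [integral_indicator_one measurableSet_Iic] using
      ae_tendsto_integral_empiricalMeasure hmeas hindep hlaw
        (measurable_one.indicator measurableSet_Iic)
        ((integrable_const 1).indicator measurableSet_Iic)
  refine (Measure.ae_ae_comm ?_).1 (ae_of_all _ hpt)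
  simp_rw [measureReal_empiricalMeasure_Iic]
  refine measurableSet_tendsto_fun (fun n => ?_)
    ((measurable_measureReal_Iic μ).comp measurable_fst)
  refine Measurable.div_const (Finset.measurable_sum _ fun i _ => ?_) _
  exact Measurable.ite (measurableSet_le ((hmeas i).comp measurable_snd) measurable_fst)
    measurable_const measurable_const

end StrongLaw

/-- `L¹` convergence of the empirical CDF under a finite first moment: if `X₁, X₂, ...`
are i.i.d. with integrable common law `μ₀`, then the `L¹` distance between the empirical
CDF and the true CDF tends to zero almost surely. -/
theorem empirical_cdf_L1_convergence {Ω : Type*} [MeasureSpace Ω]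
    [IsProbabilityMeasure (ℙ : Measure Ω)]
    (X : ℕ → Ω → ℝ) (hmeas : ∀ i, Measurable (X i))
    (hindep : iIndepFun X ℙ)
    (μ₀ : Measure ℝ) [IsProbabilityMeasure μ₀]
    (hlaw : ∀ i, Measure.map (X i) ℙ = μ₀)
    (hint : Integrable (fun x : ℝ => x) μ₀) :
    ∀ᵐ ω ∂ℙ, Tendsto
      (fun n : ℕ => ∫ t : ℝ,
        |(∑ i ∈ Finset.range n, if X i ω ≤ t then (1 : ℝ) else 0) / n -
          (μ₀ (Iic t)).toReal|)
      atTop (𝓝 0) := by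
  filter_upwards [ae_ae_tendsto_measureReal_empiricalMeasure_Iic hmeas hindep hlaw,
    ae_tendsto_integral_empiricalMeasure hmeas hindep hlaw (by fun_prop) hint.pos_part,
    ae_tendsto_integral_empiricalMeasure hmeas hindep hlaw (by fun_prop) hint.neg.pos_part]
    with ω hcdf hpos hneg
  -- shift by one so that every empirical measure is a probability measure
  have hshift := tendsto_add_atTop_nat 1
  have := tendsto_integral_abs_measureReal_Iic_sub
    (ν := fun n => empiricalMeasure (X · ω) (n + 1))
    (fun n => integrable_empiricalMeasure _ stronglyMeasurable_id _) hint
    (hcdf.mono fun t ht => ht.comp hshift) (hpos.comp hshift) (hneg.comp hshift)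
  rw [← tendsto_add_atTop_iff_nat 1]
  simp only [measureReal_empiricalMeasure_Iic] at this
  exact this
end
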